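/- arXiv:2310.14353 — 3 statements merged into one kernel-verified Lean document; each statement's English description precedes it below -/
import Mathlib

section
/- If G is an NT_k group that is not nilpotent of class at most k, then the center of G is trivial. -/
variable {G : Type*} [Group G]

/-- A subgroup is `nil_k`: nilpotent of class at most `k` (i.e. γ_{k+1} = 1). -/
def SubNilK (k : ℕ) (H : Subgroup G) : Prop := Subgroup.lowerCentralSeries (⊤ : Subgroup H) k = ⊥

/-- A subgroup `H ≤ G` is malnormal: `H ∩ g⁻¹Hg = 1` for all `g ∉ H`. -/
def Malnormal (H : Subgroup G) : Prop :=
  ∀ g ∉ H, ∀ y ∈ H, g * y * g⁻¹ ∈ H → y = 1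

/-- `H` is a maximal nil_k subgroup of `G`. -/
def MaxNilK (k : ℕ) (H : Subgroup G) : Prop :=
  SubNilK k H ∧ ∀ K : Subgroup G, SubNilK k K → H ≤ K → K = H

/-- `G` is NT_k: any two nil_k subgroups with nontrivial intersection generate
a nil_k subgroup. -/
def IsNTk (k : ℕ) (G : Type*) [Group G] : Prop :=
  ∀ K₁ K₂ : Subgroup G, SubNilK k K₁ → SubNilK k K₂ → K₁ ⊓ K₂ ≠ ⊥ →
    SubNilK k (K₁ ⊔ K₂)

/-- `G` is CSN_k: every maximal nil_k subgroup is malnormal. -/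
def IsCSNk (k : ℕ) (G : Type*) [Group G] : Prop :=
  ∀ H : Subgroup G, MaxNilK k H → Malnormal H

/-- `C^k_G(x) = { y : ⟨x, y⟩ is nilpotent of class at most k }`. -/
def CkSet (k : ℕ) (x : G) : Set G :=
  { y | SubNilK k (Subgroup.closure {x, y}) }

/-- The "ambient" lower central series of a subgroup. -/
def lcsAmb (H : Subgroup G) : ℕ → Subgroup G
  | 0 => H
  | n + 1 => ⁅lcsAmb H n, H⁆

lemma lcsAmb_eq_map (H : Subgroup G) (n : ℕ) :
    lcsAmb H n = (Subgroup.lowerCentralSeries (⊤ : Subgroup H) n).map H.subtype := by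
  induction n with
  | zero =>
    simp [lcsAmb, Subgroup.lowerCentralSeries_zero, ← MonoidHom.range_eq_map,
      Subgroup.range_subtype]
  | succ n ih =>
    show ⁅lcsAmb H n, H⁆ = (⁅Subgroup.lowerCentralSeries (⊤ : Subgroup H) n, (⊤ : Subgroup H)⁆).map H.subtype
    rw [Subgroup.map_commutator, ← ih, ← MonoidHom.range_eq_map, Subgroup.range_subtype]

lemma lcsAmb_mono {H K : Subgroup G} (h : H ≤ K) (n : ℕ) : lcsAmb H n ≤ lcsAmb K n := by
  induction n with
  | zero => exact h
  | succ n ih => exact Subgroup.commutator_mono ih h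

lemma lcsAmb_le_self (H : Subgroup G) (n : ℕ) : lcsAmb H n ≤ H := by
  cases n with
  | zero => exact le_rfl
  | succ n =>
    show ⁅lcsAmb H n, H⁆ ≤ H
    exact Subgroup.commutator_le.2
      fun g₁ h₁ g₂ h₂ => H.mul_mem (H.mul_mem (H.mul_mem (lcsAmb_le_self H n h₁) h₂)
        (H.inv_mem (lcsAmb_le_self H n h₁))) (H.inv_mem h₂)

lemma subNilK_of_comm (k : ℕ) (hk : 0 < k) (H : Subgroup G)
    (hcomm : ∀ a ∈ H, ∀ b ∈ H, a * b = b * a) : SubNilK k H := by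
  have h1 : Subgroup.lowerCentralSeries (⊤ : Subgroup H) 1 = ⊥ := by
    rw [Subgroup.top_lowerCentralSeries_one, commutator_def, Subgroup.commutator_eq_bot_iff_le_centralizer]
    intro a _ b _
    exact Subtype.ext (hcomm b b.2 a a.2)
  have := Subgroup.lowerCentralSeries_antitone (S := (⊤ : Subgroup H)) hk
  rw [h1] at this
  exact le_bot_iff.mp this

theorem stmt9 (k : ℕ) (hk : 0 < k) {G : Type*} [Group G] (hNT : IsNTk k G)
    (hnotnil : Subgroup.lowerCentralSeries (⊤ : Subgroup G) k ≠ ⊥) :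
    Subgroup.center G = ⊥ := by
  by_contra hne
  obtain ⟨z, hzc, hz1⟩ : ∃ z ∈ Subgroup.center G, z ≠ 1 := by
    by_contra h
    push_neg at h
    exact hne (le_antisymm (fun x hx => h x hx) bot_le)
  -- the directed family of nil_k subgroups containing z
  set S : Set (Subgroup G) := {H | SubNilK k H ∧ z ∈ H} with hS
  have hclos : ∀ x : G, Subgroup.closure {x, z} ∈ S := by
    intro x
    refine ⟨subNilK_of_comm k hk _ ?_, Subgroup.subset_closure (by simp)⟩
    have hz : ∀ w : G, Commute z w := fun w => (Subgroup.mem_center_iff.mp hzc w : Commute w z).symm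
    have base : ∀ a ∈ ({x, z} : Set G), ∀ b ∈ ({x, z} : Set G), Commute a b := by
      rintro a (rfl | rfl) b (rfl | rfl)
      · rfl
      · exact (hz a).symm
      · exact hz b
      · rfl
    have key : ∀ a ∈ Subgroup.closure ({x, z} : Set G),
        ∀ b ∈ ({x, z} : Set G), Commute a b := by
      intro a ha
      induction ha using Subgroup.closure_induction with
      | mem v hv => exact base v hv
      | one => exact fun b _ => Commute.one_left b
      | mul u v _ _ hu hv => exact fun b hb => (hu b hb).mul_left (hv b hb)
      | inv u _ hu => exact fun b hb => (hu b hb).inv_left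
    intro a ha b hb
    induction hb using Subgroup.closure_induction with
    | mem w hw => exact key a ha w hw
    | one => simp
    | mul u v _ _ hu hv =>
      exact (Commute.mul_right (hu) (hv) : Commute a (u * v))
    | inv u _ hu => exact (Commute.inv_right (hu) : Commute a u⁻¹)
  have hSne : Nonempty S := ⟨⟨_, hclos 1⟩⟩
  -- S is directed
  have hdir : Directed (· ≤ ·) (fun H : S => (H : Subgroup G)) := by
    rintro ⟨H₁, h₁, hz₁⟩ ⟨H₂, h₂, hz₂⟩
    have hint : H₁ ⊓ H₂ ≠ ⊥ := by
      intro hb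
      exact hz1 ((Subgroup.mem_bot).mp (hb ▸ (Subgroup.mem_inf.mpr ⟨hz₁, hz₂⟩)))
    have hsup : SubNilK k (H₁ ⊔ H₂) := hNT H₁ H₂ h₁ h₂ hint
    exact ⟨⟨H₁ ⊔ H₂, hsup, le_sup_left (a := H₁) hz₁⟩, le_sup_left, le_sup_right⟩
  -- supremum of the family is ⊤
  have htop : (⨆ H : S, (H : Subgroup G)) = ⊤ := by
    rw [eq_top_iff]
    intro x _
    exact le_iSup (fun H : S => (H : Subgroup G)) ⟨_, hclos x⟩
      (Subgroup.subset_closure (by simp))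
  -- main induction
  have key : ∀ n, Subgroup.lowerCentralSeries (⊤ : Subgroup G) n ≤ ⨆ H : S, lcsAmb (H : Subgroup G) n := by
    intro n
    induction n with
    | zero =>
      rw [Subgroup.lowerCentralSeries_zero, ← htop]
      exact le_rfl
    | succ n ih =>
      have hdirn : Directed (· ≤ ·) (fun H : S => lcsAmb (H : Subgroup G) n) := by
        rintro H₁ H₂
        obtain ⟨H₃, l₁, l₂⟩ := hdir H₁ H₂
        exact ⟨H₃, lcsAmb_mono l₁ n, lcsAmb_mono l₂ n⟩
      show ⁅Subgroup.lowerCentralSeries (⊤ : Subgroup G) n, ⊤⁆ ≤ _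
      rw [Subgroup.commutator_le]
      intro g₁ hg₁ g₂ hg₂
      have hg₁' : g₁ ∈ ⨆ H : S, lcsAmb (H : Subgroup G) n := ih hg₁
      rw [Subgroup.mem_iSup_of_directed hdirn] at hg₁'
      obtain ⟨H₁, hH₁⟩ := hg₁'
      have hg₂' : g₂ ∈ ⨆ H : S, (H : Subgroup G) := htop ▸ hg₂
      rw [Subgroup.mem_iSup_of_directed hdir] at hg₂'
      obtain ⟨H₂, hH₂⟩ := hg₂'
      obtain ⟨H₃, l₁, l₂⟩ := hdir H₁ H₂
      have : (open scoped commutatorElement in ⁅g₁, g₂⁆) ∈ lcsAmb (H₃ : Subgroup G) (n + 1) :=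
        Subgroup.commutator_mem_commutator (lcsAmb_mono l₁ n hH₁) (l₂ hH₂)
      exact le_iSup (fun H : S => lcsAmb (H : Subgroup G) (n + 1)) H₃ this
  have hbot : (⨆ H : S, lcsAmb (H : Subgroup G) k) = ⊥ := by
    rw [eq_bot_iff]
    refine iSup_le fun H => ?_
    rw [lcsAmb_eq_map, H.2.1]
    simp
  exact hnotnil (le_bot_iff.mp (hbot ▸ key k))
end

section
/- Every finite CSN_k group is nilpotent of class at most k. -/
variable {G : Type*} [Group G]

section Aux

variable {k : ℕ}

/-- Lower central series vanishing transfers across group isomorphisms. -/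
lemma lcs_eq_bot_of_mulEquiv {A B : Type*} [Group A] [Group B] (e : A ≃* B) {k : ℕ}
    (h : Subgroup.lowerCentralSeries (⊤ : Subgroup A) k = ⊥) :
    Subgroup.lowerCentralSeries (⊤ : Subgroup B) k = ⊥ := by
  have h2 : Subgroup.map e.symm.toMonoidHom (Subgroup.lowerCentralSeries (⊤ : Subgroup B) k) ≤ ⊥ := by
    rw [← h]; exact lowerCentralSeries.map e.symm.toMonoidHom k
  have h3 : Subgroup.lowerCentralSeries (⊤ : Subgroup B) k ≤ e.symm.toMonoidHom.ker :=
    (Subgroup.map_eq_bot_iff _).mp (le_bot_iff.mp h2)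
  rwa [(MonoidHom.ker_eq_bot_iff _).mpr e.symm.injective, le_bot_iff] at h3

lemma subNilK_mono {H K : Subgroup G} (hKH : K ≤ H) (h : SubNilK k H) : SubNilK k K := by
  have h2 : Subgroup.map (Subgroup.inclusion hKH) (Subgroup.lowerCentralSeries (⊤ : Subgroup K) k) ≤ ⊥ := by
    rw [← h]; exact lowerCentralSeries.map _ k
  have h3 : Subgroup.lowerCentralSeries (⊤ : Subgroup K) k ≤ (Subgroup.inclusion hKH).ker :=
    (Subgroup.map_eq_bot_iff _).mp (le_bot_iff.mp h2)
  rw [SubNilK]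
  rwa [(MonoidHom.ker_eq_bot_iff _).mpr (Subgroup.inclusion_injective hKH), le_bot_iff] at h3

/-- Conjugate of a subgroup. -/
def conjSub (g : G) (M : Subgroup G) : Subgroup G := M.map (MulAut.conj g).toMonoidHom

lemma mem_conjSub {g y : G} {M : Subgroup G} : y ∈ conjSub g M ↔ g⁻¹ * y * g ∈ M := by
  simp only [conjSub, Subgroup.mem_map, MulEquiv.coe_toMonoidHom, MulAut.conj_apply]
  constructor
  · rintro ⟨m, hm, rfl⟩
    have : g⁻¹ * (g * m * g⁻¹) * g = m := by group
    rwa [this]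
  · intro h
    exact ⟨g⁻¹ * y * g, h, by group⟩

lemma conjSub_conjSub (a b : G) (M : Subgroup G) :
    conjSub a (conjSub b M) = conjSub (a * b) M := by
  ext y
  rw [mem_conjSub, mem_conjSub, mem_conjSub]
  constructor
  · intro h
    have : (a * b)⁻¹ * y * (a * b) = b⁻¹ * (a⁻¹ * y * a) * b := by group
    rwa [this]
  · intro h
    have : b⁻¹ * (a⁻¹ * y * a) * b = (a * b)⁻¹ * y * (a * b) := by group
    rwa [this]

lemma conjSub_one (M : Subgroup G) : conjSub 1 M = M := by
  ext y; rw [mem_conjSub]; simp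

lemma subNilK_conjSub {M : Subgroup G} (h : SubNilK k M) (g : G) :
    SubNilK k (conjSub g M) :=
  lcs_eq_bot_of_mulEquiv
    (Subgroup.equivMapOfInjective M (MulAut.conj g).toMonoidHom (MulAut.conj g).injective) h

lemma maxNilK_conjSub {M : Subgroup G} (h : MaxNilK k M) (g : G) :
    MaxNilK k (conjSub g M) := by
  refine ⟨subNilK_conjSub h.1 g, fun K hK hle => ?_⟩
  have h1 : M ≤ conjSub g⁻¹ K := by
    intro y hy
    rw [mem_conjSub, inv_inv]
    apply hle
    rw [mem_conjSub]
    have heq : g⁻¹ * (g * y * g⁻¹) * g = y := by group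
    rwa [heq]
  have h2 : conjSub g⁻¹ K = M := h.2 _ (subNilK_conjSub hK g⁻¹) h1
  calc K = conjSub (g * g⁻¹) K := by rw [mul_inv_cancel, conjSub_one]
    _ = conjSub g (conjSub g⁻¹ K) := (conjSub_conjSub g g⁻¹ K).symm
    _ = conjSub g M := by rw [h2]

/-- Distinct maximal nil_k subgroups of a CSN_k group intersect trivially. -/
lemma maxNilK_inf_eq_bot (hG : IsCSNk k G) {M₁ M₂ : Subgroup G}
    (h₁ : MaxNilK k M₁) (h₂ : MaxNilK k M₂) (hne : M₁ ≠ M₂) : M₁ ⊓ M₂ = ⊥ := by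
  by_contra hD
  obtain ⟨⟨x, hxD⟩, hx1⟩ := Subgroup.ne_bot_iff_exists_ne_one.mp hD
  have hx1' : x ≠ 1 := fun h => hx1 (Subtype.ext h)
  have hnil : Group.IsNilpotent ↥M₁ := nilpotent_iff_lowerCentralSeries.mpr ⟨k, h₁.1⟩
  have hnc : NormalizerCondition ↥M₁ := normalizerCondition_of_isNilpotent
  set D : Subgroup ↥M₁ := (M₁ ⊓ M₂).subgroupOf M₁ with hDdef
  have hDtop : D ≠ ⊤ := by
    intro hDt
    have hle : M₁ ≤ M₂ := by
      intro y hy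
      have : (⟨y, hy⟩ : ↥M₁) ∈ D := hDt ▸ Subgroup.mem_top _
      exact (Subgroup.mem_subgroupOf.mp this).2
    exact hne (h₁.2 M₂ h₂.1 hle).symm
  obtain ⟨n, hn_mem, hn_not⟩ := SetLike.exists_of_lt (hnc D (lt_top_iff_ne_top.mpr hDtop))
  have hgM2 : (↑n : G) ∉ M₂ := by
    intro hmem
    exact hn_not (Subgroup.mem_subgroupOf.mpr (Subgroup.mem_inf.mpr ⟨n.2, hmem⟩))
  have hxM1 : x ∈ M₁ := (Subgroup.mem_inf.mp hxD).1
  have hxM2 : x ∈ M₂ := (Subgroup.mem_inf.mp hxD).2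
  have hconj : (↑n : G) * x * (↑n)⁻¹ ∈ M₂ := by
    have hxin : (⟨x, hxM1⟩ : ↥M₁) ∈ D := Subgroup.mem_subgroupOf.mpr hxD
    have := (Subgroup.mem_normalizer_iff.mp hn_mem ⟨x, hxM1⟩).mp hxin
    have h2 : ((n * ⟨x, hxM1⟩ * n⁻¹ : ↥M₁) : G) ∈ M₁ ⊓ M₂ := Subgroup.mem_subgroupOf.mp this
    have h3 : ((n * ⟨x, hxM1⟩ * n⁻¹ : ↥M₁) : G) = (↑n : G) * x * (↑n)⁻¹ := by
      push_cast; rfl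
    rw [h3] at h2
    exact (Subgroup.mem_inf.mp h2).2
  exact hx1' (hG M₂ h₂ ↑n hgM2 x hxM2 hconj)

lemma maxNilK_unique (hG : IsCSNk k G) {M M' : Subgroup G}
    (hM : MaxNilK k M) (hM' : MaxNilK k M') {x : G} (hx : x ≠ 1)
    (h1 : x ∈ M) (h2 : x ∈ M') : M = M' := by
  by_contra hne
  have hbot := maxNilK_inf_eq_bot hG hM hM' hne
  have : x ∈ (⊥ : Subgroup G) := hbot ▸ Subgroup.mem_inf.mpr ⟨h1, h2⟩
  exact hx (Subgroup.mem_bot.mp this)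

/-- Nontrivial maximal nil_k subgroups of a CSN_k group are self-normalizing. -/
lemma maxNilK_self_norm (hG : IsCSNk k G) {M : Subgroup G} (hM : MaxNilK k M)
    (hbot : M ≠ ⊥) {g : G} (hg : ∀ y, y ∈ M ↔ g * y * g⁻¹ ∈ M) : g ∈ M := by
  by_contra hgM
  obtain ⟨⟨y, hyM⟩, hy1⟩ := Subgroup.ne_bot_iff_exists_ne_one.mp hbot
  exact (fun h => hy1 (Subtype.ext h)) (hG M hM g hgM y hyM ((hg y).mp hyM))

lemma exists_maxNilK [Finite G] {H : Subgroup G} (h : SubNilK k H) :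
    ∃ M : Subgroup G, MaxNilK k M ∧ H ≤ M := by
  have : Finite (Subgroup G) :=
    Finite.of_injective (fun K : Subgroup G => (K : Set G)) SetLike.coe_injective
  obtain ⟨M, ⟨hM1, hM2⟩, hmax⟩ :=
    Set.Finite.exists_maximalFor id {K : Subgroup G | SubNilK k K ∧ H ≤ K}
      (Set.toFinite _) ⟨H, h, le_rfl⟩
  exact ⟨M, ⟨hM1, fun K hK hMK => le_antisymm (hmax (show K ∈ {K : Subgroup G | SubNilK k K ∧ H ≤ K} from
      ⟨hK, le_trans hM2 hMK⟩) hMK) hMK⟩, hM2⟩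

lemma subNilK_zpowers (hk : 0 < k) (x : G) : SubNilK k (Subgroup.zpowers x) := by
  have h1 : Subgroup.lowerCentralSeries (⊤ : Subgroup ↥(Subgroup.zpowers x)) 1 = ⊥ := by
    apply lowerCentralSeries_succ_eq_bot
    intro g _
    rw [Subgroup.mem_center_iff]
    intro h
    obtain ⟨m, hm⟩ := Subgroup.mem_zpowers_iff.mp g.2
    obtain ⟨n, hn⟩ := Subgroup.mem_zpowers_iff.mp h.2
    ext
    push_cast
    rw [← hm, ← hn, ← zpow_add, ← zpow_add, add_comm]
  rw [SubNilK]
  rw [eq_bot_iff, ← h1]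
  exact lowerCentralSeries_antitone _ hk

/-- The basic counting injection: cosets of a maximal nil_k subgroup times its
nonidentity elements inject into the nonidentity elements of `G`. -/
noncomputable def phiMap (M : Subgroup G) :
    (G ⧸ M) × {m : ↥M // m ≠ 1} → {x : G // x ≠ 1} := fun p =>
  ⟨p.1.out * ↑p.2.1 * p.1.out⁻¹, by
    intro h
    apply p.2.2
    have : (↑p.2.1 : G) = 1 := by
      have := congrArg (fun z => p.1.out⁻¹ * z * p.1.out) h
      simpa [mul_assoc] using this
    exact Subtype.ext this⟩

lemma phiMap_mem (M : Subgroup G) (p : (G ⧸ M) × {m : ↥M // m ≠ 1}) :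
    (phiMap M p : G) ∈ conjSub p.1.out M := by
  rw [mem_conjSub]
  have : p.1.out⁻¹ * (p.1.out * ↑p.2.1 * p.1.out⁻¹) * p.1.out = ↑p.2.1 := by group
  rw [phiMap, this]
  exact p.2.1.2

lemma conjSub_eq_of_eq (hG : IsCSNk k G) {M : Subgroup G} (hM : MaxNilK k M)
    (hbot : M ≠ ⊥) {a b : G} (hab : conjSub a M = conjSub b M) : b⁻¹ * a ∈ M := by
  apply maxNilK_self_norm hG hM hbot
  intro y
  have h2 : conjSub (b⁻¹ * a) M = M := by
    rw [← conjSub_conjSub, hab, conjSub_conjSub, inv_mul_cancel, conjSub_one]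
  constructor
  · intro hy
    have : (b⁻¹ * a) * y * (b⁻¹ * a)⁻¹ ∈ conjSub (b⁻¹ * a) M := by
      rw [mem_conjSub]
      have heq : (b⁻¹ * a)⁻¹ * ((b⁻¹ * a) * y * (b⁻¹ * a)⁻¹) * (b⁻¹ * a) = y := by group
      rwa [heq]
    rwa [h2] at this
  · intro hy
    have : y ∈ conjSub (b⁻¹ * a)⁻¹ M := by
      rw [mem_conjSub, inv_inv]
      exact hy
    rw [← h2, conjSub_conjSub, inv_mul_cancel, conjSub_one] at this
    exact this

lemma phiMap_injective [Finite G] (hG : IsCSNk k G) {M : Subgroup G} (hM : MaxNilK k M)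
    (hbot : M ≠ ⊥) : Function.Injective (phiMap M) := by
  rintro ⟨q, m⟩ ⟨q', m'⟩ h
  have hx := phiMap_mem M (q, m)
  have hx' := phiMap_mem M (q', m')
  rw [h] at hx
  have hcc : conjSub (q, m).1.out M = conjSub (q', m').1.out M :=
    maxNilK_unique hG (maxNilK_conjSub hM _) (maxNilK_conjSub hM _)
      (phiMap M (q', m')).2 hx hx'
  have hc : q'.out⁻¹ * q.out ∈ M := conjSub_eq_of_eq hG hM hbot hcc
  have hq : q = q' := by
    rw [← QuotientGroup.out_eq' q, ← QuotientGroup.out_eq' q']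
    exact (QuotientGroup.eq.mpr hc).symm
  subst hq
  have hmm : (↑m.1 : G) = ↑m'.1 := by
    have h1 : q.out * ↑m.1 * q.out⁻¹ = q.out * ↑m'.1 * q.out⁻¹ := congrArg Subtype.val h
    have := mul_right_cancel h1
    exact mul_left_cancel this
  have : m = m' := Subtype.ext (Subtype.ext hmm)
  rw [this]

end Aux

theorem stmt12 (k : ℕ) (hk : 0 < k) {G : Type*} [Group G] [Finite G]
    (hG : IsCSNk k G) :
    Subgroup.lowerCentralSeries (⊤ : Subgroup G) k = ⊥ := by
  have hTop : SubNilK k (⊤ : Subgroup G) := by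
    by_contra htop
    rcases subsingleton_or_nontrivial G with hs | hnt
    · apply htop
      rw [SubNilK, eq_bot_iff]
      exact SetLike.le_def.mpr fun a _ => Subgroup.mem_bot.mpr (Subsingleton.elim a 1)
    -- G is nontrivial; find a nontrivial proper maximal nil_k subgroup M0
    obtain ⟨x0, hx0⟩ := exists_ne (1 : G)
    obtain ⟨M0, hM0, hle0⟩ := exists_maxNilK (subNilK_zpowers hk x0)
    have hx0M0 : x0 ∈ M0 := hle0 (Subgroup.mem_zpowers x0)
    have hM0bot : M0 ≠ ⊥ := fun h => hx0 (Subgroup.mem_bot.mp (h ▸ hx0M0))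
    have hM0top : M0 ≠ ⊤ := fun h => htop (h ▸ hM0.1)
    -- basic cardinality facts
    have hcard0 : Nat.card ↥M0 * M0.index = Nat.card G := Subgroup.card_mul_index M0
    have hc0 : 1 < Nat.card ↥M0 := M0.one_lt_card_iff_ne_bot.mpr hM0bot
    have hi0pos : 0 < M0.index := Nat.pos_of_ne_zero (by
      intro h; rw [h, mul_zero] at hcard0; exact Nat.card_pos.ne' hcard0.symm)
    have hNpos : 0 < Nat.card G := Nat.card_pos
    -- card of the domain of phiMap
    have domcard : ∀ M : Subgroup G, Nat.card ((G ⧸ M) × {m : ↥M // m ≠ 1})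
        = M.index * (Nat.card ↥M - 1) := by
      intro M
      rw [Nat.card_prod]
      congr 1
      · classical
        have : Nat.card {m : ↥M // m ≠ 1} = Nat.card {m : ↥M // ¬ (m = 1)} := rfl
        rw [this]
        haveI : Fintype ↥M := Fintype.ofFinite ↥M
        rw [Nat.card_eq_fintype_card, Nat.card_eq_fintype_card, Fintype.card_subtype_compl,
          Fintype.card_subtype_eq]
    have netop_card : Nat.card {x : G // x ≠ 1} = Nat.card G - 1 := by
      classical
      have : Nat.card {x : G // x ≠ 1} = Nat.card {x : G // ¬ (x = 1)} := rfl
      rw [this]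
      haveI : Fintype G := Fintype.ofFinite G
      rw [Nat.card_eq_fintype_card, Nat.card_eq_fintype_card, Fintype.card_subtype_compl,
        Fintype.card_subtype_eq]
    by_cases hcase : ∀ x : G, x ≠ 1 → ∃ g : G, x ∈ conjSub g M0
    · -- Case A : phiMap M0 is bijective, forcing M0 = ⊤
      have hsurj : Function.Surjective (phiMap M0) := by
        rintro ⟨x, hx⟩
        obtain ⟨g, hg⟩ := hcase x hx
        set q : G ⧸ M0 := QuotientGroup.mk g with hqdef
        have hgq : g⁻¹ * q.out ∈ M0 := by
          apply QuotientGroup.eq.mp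
          rw [QuotientGroup.out_eq' q]
        have hmem : q.out⁻¹ * x * q.out ∈ M0 := by
          have hxg : g⁻¹ * x * g ∈ M0 := mem_conjSub.mp hg
          have heq : q.out⁻¹ * x * q.out
              = (g⁻¹ * q.out)⁻¹ * (g⁻¹ * x * g) * (g⁻¹ * q.out) := by group
          rw [heq]
          exact M0.mul_mem (M0.mul_mem (M0.inv_mem hgq) hxg) hgq
        have hm1 : (⟨q.out⁻¹ * x * q.out, hmem⟩ : ↥M0) ≠ 1 := by
          intro h
          apply hx
          have h2 : q.out⁻¹ * x * q.out = 1 := congrArg Subtype.val h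
          have := congrArg (fun z => q.out * z * q.out⁻¹) h2
          simpa [mul_assoc] using this
        refine ⟨(q, ⟨⟨q.out⁻¹ * x * q.out, hmem⟩, hm1⟩), ?_⟩
        apply Subtype.ext
        show q.out * (q.out⁻¹ * x * q.out) * q.out⁻¹ = x
        group
      have hbij : Function.Bijective (phiMap M0) :=
        ⟨phiMap_injective hG hM0 hM0bot, hsurj⟩
      have hcardeq := Nat.card_eq_of_bijective _ hbij
      rw [domcard M0, netop_card] at hcardeq
      -- arithmetic: index = 1
      have e0 : M0.index * (Nat.card ↥M0 - 1) + M0.index = Nat.card G := by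
        calc M0.index * (Nat.card ↥M0 - 1) + M0.index
            = ((Nat.card ↥M0 - 1) + 1) * M0.index := by ring
          _ = Nat.card ↥M0 * M0.index := by rw [Nat.sub_add_cancel hc0.le]
          _ = Nat.card G := hcard0
      set A0 := M0.index * (Nat.card ↥M0 - 1) with hA0
      have hidx1 : M0.index = 1 := by omega
      exact hM0top (Subgroup.index_eq_one.mp hidx1)
    · -- Case B : there is x1 outside all conjugates of M0
      push_neg at hcase
      obtain ⟨x1, hx1, hx1out⟩ := hcase
      obtain ⟨M1, hM1, hle1⟩ := exists_maxNilK (subNilK_zpowers hk x1)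
      have hx1M1 : x1 ∈ M1 := hle1 (Subgroup.mem_zpowers x1)
      have hM1bot : M1 ≠ ⊥ := fun h => hx1 (Subgroup.mem_bot.mp (h ▸ hx1M1))
      have hcard1 : Nat.card ↥M1 * M1.index = Nat.card G := Subgroup.card_mul_index M1
      have hc1 : 1 < Nat.card ↥M1 := M1.one_lt_card_iff_ne_bot.mpr hM1bot
      have hi1pos : 0 < M1.index := Nat.pos_of_ne_zero (by
        intro h; rw [h, mul_zero] at hcard1; exact Nat.card_pos.ne' hcard1.symm)
      -- combined injection
      set Ψ : ((G ⧸ M0) × {m : ↥M0 // m ≠ 1}) ⊕ ((G ⧸ M1) × {m : ↥M1 // m ≠ 1})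
          → {x : G // x ≠ 1} := Sum.elim (phiMap M0) (phiMap M1) with hΨ
      have hdisj : ∀ p0 p1, phiMap M0 p0 ≠ phiMap M1 p1 := by
        intro p0 p1 heq
        have h0 := phiMap_mem M0 p0
        have h1 := phiMap_mem M1 p1
        rw [heq] at h0
        have hne1 := (phiMap M1 p1).2
        have hcc : conjSub p0.1.out M0 = conjSub p1.1.out M1 :=
          maxNilK_unique hG (maxNilK_conjSub hM0 _) (maxNilK_conjSub hM1 _) hne1 h0 h1
        apply hx1out (p1.1.out⁻¹ * p0.1.out)
        have : conjSub p1.1.out⁻¹ (conjSub p0.1.out M0) = M1 := by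
          rw [hcc, conjSub_conjSub, inv_mul_cancel, conjSub_one]
        rw [← conjSub_conjSub, this]
        exact hx1M1
      have hinj : Function.Injective Ψ := by
        rintro (p0 | p0) (p1 | p1) h
        · exact congrArg Sum.inl (phiMap_injective hG hM0 hM0bot h)
        · exact absurd h (hdisj p0 p1)
        · exact absurd h.symm (hdisj p1 p0)
        · exact congrArg Sum.inr (phiMap_injective hG hM1 hM1bot h)
      have hle := Nat.card_le_card_of_injective Ψ hinj
      rw [Nat.card_sum, domcard M0, domcard M1, netop_card] at hle
      have e0 : M0.index * (Nat.card ↥M0 - 1) + M0.index = Nat.card G := by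
        calc M0.index * (Nat.card ↥M0 - 1) + M0.index
            = ((Nat.card ↥M0 - 1) + 1) * M0.index := by ring
          _ = Nat.card ↥M0 * M0.index := by rw [Nat.sub_add_cancel hc0.le]
          _ = Nat.card G := hcard0
      have e1 : M1.index * (Nat.card ↥M1 - 1) + M1.index = Nat.card G := by
        calc M1.index * (Nat.card ↥M1 - 1) + M1.index
            = ((Nat.card ↥M1 - 1) + 1) * M1.index := by ring
          _ = Nat.card ↥M1 * M1.index := by rw [Nat.sub_add_cancel hc1.le]
          _ = Nat.card G := hcard1
      have h20 : 2 * M0.index ≤ Nat.card G :=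
        le_trans (Nat.mul_le_mul_right _ hc0) (le_of_eq hcard0)
      have h21 : 2 * M1.index ≤ Nat.card G :=
        le_trans (Nat.mul_le_mul_right _ hc1) (le_of_eq hcard1)
      set A0 := M0.index * (Nat.card ↥M0 - 1) with hA0
      set A1 := M1.index * (Nat.card ↥M1 - 1) with hA1
      omega
  -- conclude
  exact lcs_eq_bot_of_mulEquiv Subgroup.topEquiv hTop
end

section
/- If G is an NT_k group with Z_k(G) ≠ 1 (the k-th term of the upper central series is nontrivial), then G is nilpotent of class at most k. -/
variable {G : Type*} [Group G]

open Subgroup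
open scoped commutatorElement


lemma commute_of_mem_closure_pair {c d : G} (h : Commute c d) :
    ∀ x ∈ Subgroup.closure {c, d}, ∀ y ∈ Subgroup.closure {c, d}, Commute x y := by
  have hsub : Subgroup.closure {c, d} ≤ Subgroup.centralizer {c, d} := by
    apply Subgroup.closure_le _ |>.mpr
    intro s hs
    rcases hs with rfl | rfl <;> rw [SetLike.mem_coe, Subgroup.mem_centralizer_iff] <;>
      rintro g (rfl | rfl)
    · rfl
    · exact h.symm.eq
    · exact h.eq
    · rfl
  intro x hx y hy
  have hx' := Subgroup.mem_centralizer_iff.mp (hsub hx)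
  have : Subgroup.closure {c, d} ≤ Subgroup.centralizer {x} := by
    apply Subgroup.closure_le _ |>.mpr
    rintro s hs
    rw [SetLike.mem_coe, Subgroup.mem_centralizer_iff]
    rintro g rfl
    exact (hx' s hs).symm
  have := Subgroup.mem_centralizer_iff.mp (this hy) x rfl
  exact this

lemma map_top_subtype (H : Subgroup G) : (⊤ : Subgroup H).map H.subtype = H := by
  rw [← MonoidHom.range_eq_map, Subgroup.range_subtype]

lemma subNilK_pair {m : ℕ} {a : G} (ha : a ∈ Subgroup.upperCentralSeries G (m + 1)) (b : G) :
    SubNilK (m + 1) (Subgroup.closure {a, b}) := by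
  set H := Subgroup.closure {a, b} with hH
  have key : ∀ i : ℕ, ((⊤ : Subgroup H).lowerCentralSeries (i + 1)).map H.subtype ≤
      Subgroup.upperCentralSeries G (m - i) := by
    intro i
    induction i with
    | zero =>
      have h1 : ((⊤ : Subgroup H).lowerCentralSeries 1).map H.subtype = ⁅H, H⁆ := by
        show Subgroup.map H.subtype ⁅(⊤ : Subgroup ↥H), ⊤⁆ = _
        rw [Subgroup.map_commutator, map_top_subtype]
      rw [h1, Nat.sub_zero]
      rw [Subgroup.commutator_le]
      intro x hx y hy
      set N := Subgroup.upperCentralSeries G m with hN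
      haveI : N.Normal := inferInstance
      rw [← QuotientGroup.eq_one_iff (G := G) (N := N)]
      show (QuotientGroup.mk' N) ⁅x, y⁆ = 1
      rw [map_commutatorElement, commutatorElement_eq_one_iff_commute]
      have hab : Commute ((a : G) : G ⧸ N) ((b : G) : G ⧸ N) := by
        rw [← commutatorElement_eq_one_iff_commute]
        show (QuotientGroup.mk' N) ⁅a, b⁆ = 1
        rw [QuotientGroup.mk'_apply, QuotientGroup.eq_one_iff]
        have := Subgroup.mem_upperCentralSeries_succ_iff.mp ha b
        simpa [commutatorElement_def] using this
      have himg : ∀ z ∈ H, ((z : G) : G ⧸ N) ∈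
          Subgroup.closure {((a : G) : G ⧸ N), ((b : G) : G ⧸ N)} := by
        intro z hz
        have : ((QuotientGroup.mk' N) z) ∈ H.map (QuotientGroup.mk' N) :=
          Subgroup.mem_map_of_mem _ hz
        rwa [hH, MonoidHom.map_closure, Set.image_pair] at this
      exact commute_of_mem_closure_pair hab _ (himg x hx) _ (himg y hy)
    | succ i ih =>
      have h1 : ((⊤ : Subgroup H).lowerCentralSeries (i + 2)).map H.subtype =
          ⁅((⊤ : Subgroup H).lowerCentralSeries (i + 1)).map H.subtype, H⁆ := by
        show Subgroup.map H.subtype ⁅(⊤ : Subgroup H).lowerCentralSeries (i + 1), ⊤⁆ = _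
        rw [Subgroup.map_commutator, map_top_subtype]
      rw [h1, Subgroup.commutator_le]
      intro x hx y hy
      have hx' := ih hx
      rcases Nat.eq_zero_or_eq_succ_pred (m - i) with h0 | hsucc
      · rw [h0, Subgroup.upperCentralSeries_zero, Subgroup.mem_bot] at hx'
        subst hx'
        have h1 : ⁅(1 : G), y⁆ = 1 := by simp [commutatorElement_def]
        rw [h1]; exact Subgroup.one_mem _
      · rw [hsucc] at hx'
        have := Subgroup.mem_upperCentralSeries_succ_iff.mp hx' y
        have hmi : m - (i + 1) = m - i - 1 := by omega
        rw [hmi]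
        simpa [commutatorElement_def] using this
  have := key m
  rw [Nat.sub_self, Subgroup.upperCentralSeries_zero, le_bot_iff,
    Subgroup.map_eq_bot_iff_of_injective _ (Subgroup.subtype_injective H)] at this
  exact this


lemma subNilK_list {m : ℕ} {a : G} (hNT : IsNTk (m + 1) G)
    (ha : a ∈ Subgroup.upperCentralSeries G (m + 1)) (ha1 : a ≠ (1 : G)) :
    ∀ l : List G, SubNilK (m + 1) (Subgroup.closure ({a} ∪ {x | x ∈ l})) := by
  intro l
  induction l with
  | nil =>
    have h : ({a} ∪ {x | x ∈ ([] : List G)} : Set G) = {a, a} := by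
      ext z; simp
    rw [h]
    exact subNilK_pair ha a
  | cons g l ih =>
    have h : ({a} ∪ {x | x ∈ g :: l} : Set G) =
        ({a, g} : Set G) ∪ ({a} ∪ {x | x ∈ l}) := by
      ext z; simp [List.mem_cons]; tauto
    rw [h, Subgroup.closure_union]
    apply hNT _ _ (subNilK_pair ha g) ih
    intro hbot
    have hmem : a ∈ Subgroup.closure ({a, g} : Set G) ⊓
        Subgroup.closure ({a} ∪ {x | x ∈ l}) := by
      constructor
      · exact Subgroup.subset_closure (Set.mem_insert a {g})
      · exact Subgroup.subset_closure (Set.mem_union_left _ rfl)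
    rw [hbot, Subgroup.mem_bot] at hmem
    exact ha1 hmem

/-- Iterated commutator along a list. -/
def commList : G → List G → G
  | x, [] => x
  | x, g :: l => commList (⁅x, g⁆ : G) l

lemma mem_upperCentralSeries_of_commList :
    ∀ (n : ℕ) (x : G), (∀ l : List G, l.length = n → commList x l = 1) →
      x ∈ Subgroup.upperCentralSeries G n := by
  intro n
  induction n with
  | zero =>
    intro x h
    have := h [] rfl
    rw [Subgroup.upperCentralSeries_zero, Subgroup.mem_bot]
    exact this
  | succ n ih =>
    intro x h
    rw [Subgroup.mem_upperCentralSeries_succ_iff]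
    intro y
    have : ⁅x, y⁆ ∈ Subgroup.upperCentralSeries G n := by
      apply ih
      intro l hl
      exact h (y :: l) (by simp [hl])
    simpa [commutatorElement_def] using this

lemma commList_mem_map (H : Subgroup G) :
    ∀ (l : List G) (n : ℕ) (x : G), (∀ g ∈ l, g ∈ H) →
      x ∈ ((⊤ : Subgroup H).lowerCentralSeries n).map H.subtype →
      commList x l ∈ ((⊤ : Subgroup H).lowerCentralSeries (n + l.length)).map H.subtype := by
  intro l
  induction l with
  | nil => intro n x _ hx; simpa [commList] using hx
  | cons g l ih =>
    intro n x hl hx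
    have hg : g ∈ H := hl g (List.mem_cons_self)
    obtain ⟨x', hx', rfl⟩ := hx
    have hcomm : ⁅(x' : G), g⁆ ∈ ((⊤ : Subgroup H).lowerCentralSeries (n + 1)).map H.subtype := by
      refine ⟨⁅x', (⟨g, hg⟩ : ↥H)⁆, ?_, ?_⟩
      · exact Subgroup.commutator_mem_commutator hx' (Subgroup.mem_top _)
      · simp [commutatorElement_def]
    have := ih (n + 1) ⁅(x' : G), g⁆ (fun z hz => hl z (List.mem_cons_of_mem g hz)) hcomm
    show commList ⁅(x' : G), g⁆ l ∈ _
    have harith : n + 1 + l.length = n + (g :: l).length := by simp; omega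
    rwa [harith] at this

theorem stmt17 (k : ℕ) {G : Type*} [Group G] (hNT : IsNTk k G)
    (hZ : Subgroup.upperCentralSeries G k ≠ ⊥) :
    Subgroup.lowerCentralSeries (⊤ : Subgroup G) k = ⊥ := by
  cases k with
  | zero => exact absurd rfl hZ
  | succ m =>
    obtain ⟨a₀, ha₀⟩ := Subgroup.ne_bot_iff_exists_ne_one.mp hZ
    set a : G := (a₀ : G) with haa
    have ha : a ∈ Subgroup.upperCentralSeries G (m + 1) := a₀.2
    have ha1 : a ≠ 1 := by
      intro h
      exact ha₀ (Subtype.ext h)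
    have htop : Subgroup.upperCentralSeries G (m + 1) = ⊤ := by
      rw [eq_top_iff']
      intro b
      apply mem_upperCentralSeries_of_commList
      intro l hl
      set H := Subgroup.closure ({a} ∪ {x | x ∈ b :: l}) with hHdef
      have hnil : SubNilK (m + 1) H := subNilK_list hNT ha ha1 (b :: l)
      have hb : b ∈ H :=
        Subgroup.subset_closure (Set.mem_union_right _ (List.mem_cons_self))
      have hmem : commList b l ∈ ((⊤ : Subgroup H).lowerCentralSeries (0 + l.length)).map H.subtype := by
        apply commList_mem_map H l 0 b
        · intro g hg
          exact Subgroup.subset_closure (Set.mem_union_right _ (List.mem_cons_of_mem b hg))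
        · rw [Subgroup.lowerCentralSeries_zero, map_top_subtype]
          exact hb
      rw [Nat.zero_add, hl, hnil] at hmem
      simpa using hmem
    haveI : Group.IsNilpotent G := ⟨⟨m + 1, htop⟩⟩
    rw [Subgroup.lowerCentralSeries_eq_bot_iff_nilpotencyClass_le]
    exact Subgroup.upperCentralSeries_eq_top_iff_nilpotencyClass_le.mp htop
end
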